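/- Let (X_i, Y_i), i = 1, ..., n+1, be exchangeable random pairs in ℝ^p × ℝ, let f̂ : ℝ^p → ℝ and v : ℝ^p → (0, ∞) be fixed measurable functions, define R_i = |Y_i − f̂(X_i)| · v(X_i), let α ∈ (0,1) satisfy ⌈(1−α)(n+1)⌉ ≤ n, and let q̂ be the ⌈(1−α)(n+1)⌉-th smallest value among R_1, ..., R_n. If in addition the scores R_1, ..., R_{n+1} are almost surely pairwise distinct, then P(R_{n+1} ≤ q̂) ≤ 1 − α + 1/(n+1). -/

import Mathlib

/-!
Let `k = ⌈(1 - α)(n + 1)⌉`. If `R_{n+1} ≤ q̂`, fewer than `k` calibration scores lie strictly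
below `R_{n+1}`, so the rank of `R_{n+1}` among all `n + 1` scores is below `k`. By
exchangeability every index is equally likely to have rank below `k`, and when the scores are
distinct exactly `k` indices do; hence that probability is `k / (n + 1) ≤ 1 - α + 1 / (n + 1)`.
-/

open MeasureTheory

/-- The `k`-th smallest value among `R 0, …, R (n-1)` (1-indexed: `k = 1` gives the
minimum), defined as the least `t` such that at least `k` of the values are `≤ t`. -/
noncomputable def kthSmallest {n : ℕ} (R : Fin n → ℝ) (k : ℕ) : ℝ :=
  sInf {t : ℝ | k ≤ (Finset.univ.filter (fun i => R i ≤ t)).card}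

open Finset Function Filter Topology ProbabilityTheory
open scoped ENNReal

section Rank

variable {ι κ α : Type*} [Fintype ι] [LinearOrder α]

def strictRank (r : ι → α) (j : ι) : ℕ := #{i | r i < r j}

lemma strictRank_comp_equiv [Fintype κ] (r : ι → α) (e : κ ≃ ι) (j : κ) :
    strictRank (r ∘ e) j = strictRank r (e j) :=
  card_equiv e (by simp)

lemma strictRank_lt_card (r : ι → α) (j : ι) : strictRank r j < Fintype.card ι :=
  card_lt_univ_of_notMem (x := j) (by simp)

lemma strictRank_lt_strictRank {r : ι → α} {a b : ι} (h : r a < r b) :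
    strictRank r a < strictRank r b :=
  card_lt_card <| (ssubset_iff_of_subset fun i hi => by
    simp only [mem_filter, mem_univ, true_and] at hi ⊢; exact hi.trans h).2 ⟨a, by simpa, by simp⟩

lemma strictRank_injective {r : ι → α} (hr : Injective r) : Injective (strictRank r) := by
  intro a b hab
  by_contra hne
  rcases (hr.ne hne).lt_or_gt with h | h
  · exact (strictRank_lt_strictRank h).ne hab
  · exact (strictRank_lt_strictRank h).ne' hab

/-- Distinct values have ranks `0, …, card ι - 1`, each taken once. -/
lemma card_strictRank_lt {r : ι → α} (hr : Injective r) {k : ℕ} (hk : k ≤ Fintype.card ι) :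
    #{j | strictRank r j < k} = k := by
  let e : ι ≃ Fin (Fintype.card ι) := Equiv.ofBijective (fun j => ⟨_, strictRank_lt_card r j⟩)
    ((Fintype.bijective_iff_injective_and_card _).2
      ⟨fun a b h => strictRank_injective hr (Fin.val_eq_of_eq h), by simp⟩)
  rw [card_equiv e (t := ({i | (i : ℕ) < k} : Finset (Fin _))) (by simp [e]),
    Fin.card_filter_val_lt, min_eq_right hk]

lemma strictRank_last {n : ℕ} (r : Fin (n + 1) → α) :
    strictRank r (Fin.last n) = #{i : Fin n | r i.castSucc < r (Fin.last n)} := by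
  simp only [strictRank, card_filter, Fin.sum_univ_castSucc, lt_irrefl, if_false, add_zero]

end Rank

lemma exists_lt_forall_lt_iff_le {ι α : Type*} [Finite ι] [LinearOrder α] [TopologicalSpace α]
    [OrderTopology α] [DenselyOrdered α] [NoMinOrder α] (r : ι → α) (x : α) :
    ∃ t < x, ∀ i, r i < x ↔ r i ≤ t := by
  have hev : ∀ i, ∀ᶠ t in 𝓝[<] x, (r i < x ↔ r i ≤ t) := by
    intro i
    by_cases hi : r i < x
    · filter_upwards [Ioo_mem_nhdsLT hi] with t ht using iff_of_true hi ht.1.le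
    · filter_upwards [self_mem_nhdsWithin] with t (ht : t < x)
      exact iff_of_false hi fun h => hi (h.trans_lt ht)
  exact (eventually_mem_nhdsWithin.and (eventually_all.2 hev)).exists

lemma le_kthSmallest_iff {n k : ℕ} (r : Fin n → ℝ) (hk₀ : 1 ≤ k) (hkn : k ≤ n) (x : ℝ) :
    x ≤ kthSmallest r k ↔ #{i | r i < x} < k := by
  obtain ⟨M, hM⟩ := Finite.bddAbove_range r
  obtain ⟨m, hm⟩ := Finite.bddBelow_range r
  have hne : {t : ℝ | k ≤ #{i | r i ≤ t}}.Nonempty :=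
    ⟨M, by simpa [filter_true_of_mem fun i _ => hM (Set.mem_range_self i)] using hkn⟩
  have hbdd : BddBelow {t : ℝ | k ≤ #{i | r i ≤ t}} := by
    refine ⟨m, fun t ht => ?_⟩
    obtain ⟨i, hi⟩ := card_pos.1 (hk₀.trans ht)
    exact (hm (Set.mem_range_self i)).trans (mem_filter.1 hi).2
  rw [kthSmallest, le_csInf_iff hbdd hne]
  constructor
  · intro h
    obtain ⟨t, htx, ht⟩ := exists_lt_forall_lt_iff_le r x
    by_contra! hcard
    simp only [ht] at hcard
    exact (h t hcard).not_gt htx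
  · intro h t ht
    by_contra! htx
    exact (ht.trans (card_le_card fun i hi => by
      simp only [mem_filter, mem_univ, true_and] at hi ⊢; exact hi.trans_lt htx)).not_gt h

lemma measurableSet_strictRank_lt {ι : Type*} [Fintype ι] (j : ι) (k : ℕ) :
    MeasurableSet {w : ι → ℝ | strictRank w j < k} := by
  have : Measurable fun w : ι → ℝ => strictRank w j := by
    simp only [strictRank, card_filter]
    exact Finset.measurable_sum _ fun i _ => Measurable.ite
      (measurableSet_lt (measurable_pi_apply i) (measurable_pi_apply j))
      measurable_const measurable_const
  exact this measurableSet_Iio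

lemma sum_measure_eq_of_ae_card_eq {Ω ι : Type*} [MeasurableSpace Ω] [Fintype ι]
    (μ : Measure Ω) {s : ι → Set Ω} [∀ ω, DecidablePred fun j => ω ∈ s j]
    (hs : ∀ j, MeasurableSet (s j)) {c : ℕ} (hc : ∀ᵐ ω ∂μ, #{j | ω ∈ s j} = c) :
    ∑ j, μ (s j) = c * μ Set.univ := by
  calc ∑ j, μ (s j) = ∑ j, ∫⁻ ω, (s j).indicator 1 ω ∂μ := by
        simp only [lintegral_indicator_one (hs _)]
    _ = ∫⁻ ω, ∑ j, (s j).indicator 1 ω ∂μ :=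
        (lintegral_finsetSum _ fun j _ => measurable_one.indicator (hs j)).symm
    _ = ∫⁻ _, (c : ℝ≥0∞) ∂μ := lintegral_congr_ae <| hc.mono fun ω hω => by
        simp only [Set.indicator_apply, Pi.one_apply, sum_boole, hω]
    _ = c * μ Set.univ := lintegral_const _

namespace ProbabilityTheory

variable {Ω ι E : Type*} [MeasurableSpace Ω] [MeasurableSpace E] {P : Measure Ω}

def IsExchangeable (P : Measure Ω) (Z : ι → Ω → E) : Prop :=
  ∀ π : Equiv.Perm ι,
    Measure.map (fun ω => fun i => Z (π i) ω) P = Measure.map (fun ω => fun i => Z i ω) P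

lemma IsExchangeable.comp {F : Type*} [MeasurableSpace F] {Z : ι → Ω → E}
    (h : IsExchangeable P Z) (hZ : ∀ i, Measurable (Z i)) {g : E → F} (hg : Measurable g) :
    IsExchangeable P (fun i ω => g (Z i ω)) := by
  intro π
  have hg' : Measurable fun (w : ι → E) i => g (w i) :=
    measurable_pi_lambda _ fun i => hg.comp (measurable_pi_apply i)
  have := congrArg (Measure.map fun w i => g (w i)) (h π)
  rwa [Measure.map_map hg' (measurable_pi_lambda _ fun i => hZ (π i)),
    Measure.map_map hg' (measurable_pi_lambda _ hZ)] at this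

lemma IsExchangeable.measure_comp_perm_mem {Z : ι → Ω → E} (h : IsExchangeable P Z)
    (hZ : ∀ i, Measurable (Z i)) (π : Equiv.Perm ι) {B : Set (ι → E)} (hB : MeasurableSet B) :
    P {ω | (fun i => Z (π i) ω) ∈ B} = P {ω | (fun i => Z i ω) ∈ B} := by
  change P ((fun ω i => Z (π i) ω) ⁻¹' B) = P ((fun ω i => Z i ω) ⁻¹' B)
  rw [← Measure.map_apply (measurable_pi_lambda _ fun i => hZ (π i)) hB, h π,
    Measure.map_apply (measurable_pi_lambda _ hZ) hB]

variable [Fintype ι] {R : ι → Ω → ℝ}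

lemma IsExchangeable.measure_strictRank_lt_eq (h : IsExchangeable P R)
    (hR : ∀ i, Measurable (R i)) (k : ℕ) (j j' : ι) :
    P {ω | strictRank (fun i => R i ω) j < k} = P {ω | strictRank (fun i => R i ω) j' < k} := by
  classical
  have hswap (ω : Ω) : strictRank (fun i => R (Equiv.swap j j' i) ω) j' =
      strictRank (fun i => R i ω) j :=
    (strictRank_comp_equiv (fun i => R i ω) (Equiv.swap j j') j').trans
      (by rw [Equiv.swap_apply_right])
  simpa only [Set.mem_ofPred_eq, hswap] using
    h.measure_comp_perm_mem hR (Equiv.swap j j') (measurableSet_strictRank_lt j' k)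

lemma IsExchangeable.card_mul_measure_strictRank_lt [IsProbabilityMeasure P]
    (h : IsExchangeable P R) (hR : ∀ i, Measurable (R i))
    (hinj : ∀ᵐ ω ∂P, Injective fun i => R i ω) {k : ℕ} (hk : k ≤ Fintype.card ι) (j : ι) :
    Fintype.card ι * P {ω | strictRank (fun i => R i ω) j < k} = k := by
  have hE : ∀ j', MeasurableSet {ω | strictRank (fun i => R i ω) j' < k} := fun j' =>
    measurable_pi_lambda _ hR (measurableSet_strictRank_lt j' k)
  calc Fintype.card ι * P {ω | strictRank (fun i => R i ω) j < k}
      = ∑ j', P {ω | strictRank (fun i => R i ω) j' < k} := by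
        simp [h.measure_strictRank_lt_eq hR k _ j]
    _ = k := by
        rw [sum_measure_eq_of_ae_card_eq P hE (hinj.mono fun ω hω => card_strictRank_lt hω hk),
          measure_univ, mul_one]

end ProbabilityTheory

lemma natCeil_mul_div_le {a : ℝ} (ha : 0 ≤ a) (m : ℕ) :
    (⌈a * ((m : ℝ) + 1)⌉₊ : ℝ≥0∞) / ((m : ℝ≥0∞) + 1) ≤
      ENNReal.ofReal (a + 1 / ((m : ℝ) + 1)) := by
  have hm : (0 : ℝ) < m + 1 := by positivity
  have hreal : (⌈a * (m + 1)⌉₊ : ℝ) / (m + 1) ≤ a + 1 / (m + 1) := by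
    rw [div_le_iff₀ hm, add_mul, one_div_mul_cancel hm.ne']
    exact (Nat.ceil_lt_add_one (by positivity)).le
  calc (⌈a * ((m : ℝ) + 1)⌉₊ : ℝ≥0∞) / ((m : ℝ≥0∞) + 1)
      = ENNReal.ofReal ((⌈a * (m + 1)⌉₊ : ℝ) / (m + 1)) := by
        rw [ENNReal.ofReal_div_of_pos hm, ENNReal.ofReal_natCast,
          ENNReal.ofReal_add (by positivity) zero_le_one, ENNReal.ofReal_natCast,
          ENNReal.ofReal_one]
    _ ≤ ENNReal.ofReal (a + 1 / ((m : ℝ) + 1)) := ENNReal.ofReal_le_ofReal hreal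

theorem lwcp_marginal_coverage_upper_general
    {Ω : Type*} [MeasurableSpace Ω] (P : Measure Ω) [IsProbabilityMeasure P]
    (p n : ℕ)
    (Z : Fin (n + 1) → Ω → (Fin p → ℝ) × ℝ)
    (hZmeas : ∀ i, Measurable (Z i))
    (hexch : ∀ π : Equiv.Perm (Fin (n + 1)),
      Measure.map (fun ω => fun i => Z (π i) ω) P
        = Measure.map (fun ω => fun i => Z i ω) P)
    (fhat : (Fin p → ℝ) → ℝ) (hf : Measurable fhat)
    (v : (Fin p → ℝ) → ℝ) (hv : Measurable v)
    (α : ℝ) (hα : α ∈ Set.Ioo (0 : ℝ) 1)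
    (hk : ⌈(1 - α) * ((n : ℝ) + 1)⌉₊ ≤ n)
    (R : Fin (n + 1) → Ω → ℝ)
    (hR : ∀ i ω, R i ω = |(Z i ω).2 - fhat (Z i ω).1| * v (Z i ω).1)
    (hdistinct : ∀ᵐ ω ∂P, ∀ i j : Fin (n + 1), i ≠ j → R i ω ≠ R j ω)
    (qhat : Ω → ℝ)
    (hq : ∀ ω, qhat ω =
      kthSmallest (fun i : Fin n => R i.castSucc ω) ⌈(1 - α) * ((n : ℝ) + 1)⌉₊) :
    P {ω | R (Fin.last n) ω ≤ qhat ω}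
      ≤ ENNReal.ofReal (1 - α + 1 / ((n : ℝ) + 1)) := by
  set k := ⌈(1 - α) * ((n : ℝ) + 1)⌉₊
  have hα' : 0 < 1 - α := sub_pos.2 hα.2
  have hk₀ : 1 ≤ k := Nat.ceil_pos.2 (mul_pos hα' (by positivity))
  have hRZ : R = fun i ω => |(Z i ω).2 - fhat (Z i ω).1| * v (Z i ω).1 := funext₂ hR
  have hg : Measurable fun z : (Fin p → ℝ) × ℝ => |z.2 - fhat z.1| * v z.1 := by fun_prop
  have hRexch : IsExchangeable P R := hRZ ▸ IsExchangeable.comp hexch hZmeas hg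
  have hRmeas (i : Fin (n + 1)) : Measurable (R i) := hRZ ▸ hg.comp (hZmeas i)
  have hinj : ∀ᵐ ω ∂P, Injective fun i => R i ω :=
    hdistinct.mono fun ω hω a b => not_imp_not.1 (hω a b)
  have hcover : {ω | R (Fin.last n) ω ≤ qhat ω} ⊆
      {ω | strictRank (fun i => R i ω) (Fin.last n) < k} := fun ω hω => by
    rw [Set.mem_ofPred_eq, hq, le_kthSmallest_iff _ hk₀ hk] at hω
    rwa [Set.mem_ofPred_eq, strictRank_last]
  have hmass := hRexch.card_mul_measure_strictRank_lt hRmeas hinj (k := k)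
    (by rw [Fintype.card_fin]; omega) (Fin.last n)
  calc P {ω | R (Fin.last n) ω ≤ qhat ω}
      ≤ P {ω | strictRank (fun i => R i ω) (Fin.last n) < k} := measure_mono hcover
    _ = k / ((n : ℝ≥0∞) + 1) := by
        rw [ENNReal.eq_div_iff (by simp) (by simp), ← hmass, Fintype.card_fin, Nat.cast_succ]
    _ ≤ ENNReal.ofReal (1 - α + 1 / ((n : ℝ) + 1)) :=
        natCeil_mul_div_le hα'.le n

/-- **Marginal coverage of weighted split conformal prediction (upper bound).**
Under the same setup as the lower bound, if in addition the scores
`R_1, …, R_{n+1}` are almost surely pairwise distinct, then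
`P(R_{n+1} ≤ q̂) ≤ 1 − α + 1/(n+1)`. -/
theorem lwcp_marginal_coverage_upper
    {Ω : Type*} [MeasurableSpace Ω] (P : Measure Ω) [IsProbabilityMeasure P]
    (p n : ℕ)
    (Z : Fin (n + 1) → Ω → (Fin p → ℝ) × ℝ)
    (hZmeas : ∀ i, Measurable (Z i))
    (hexch : ∀ π : Equiv.Perm (Fin (n + 1)),
      Measure.map (fun ω => fun i => Z (π i) ω) P
        = Measure.map (fun ω => fun i => Z i ω) P)
    (fhat : (Fin p → ℝ) → ℝ) (hf : Measurable fhat)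
    (v : (Fin p → ℝ) → ℝ) (hv : Measurable v) (hvpos : ∀ x, 0 < v x)
    (α : ℝ) (hα : α ∈ Set.Ioo (0 : ℝ) 1)
    (hk : ⌈(1 - α) * ((n : ℝ) + 1)⌉₊ ≤ n)
    (R : Fin (n + 1) → Ω → ℝ)
    (hR : ∀ i ω, R i ω = |(Z i ω).2 - fhat (Z i ω).1| * v (Z i ω).1)
    (hdistinct : ∀ᵐ ω ∂P, ∀ i j : Fin (n + 1), i ≠ j → R i ω ≠ R j ω)
    (qhat : Ω → ℝ)
    (hq : ∀ ω, qhat ω =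
      kthSmallest (fun i : Fin n => R i.castSucc ω) ⌈(1 - α) * ((n : ℝ) + 1)⌉₊) :
    P {ω | R (Fin.last n) ω ≤ qhat ω}
      ≤ ENNReal.ofReal (1 - α + 1 / ((n : ℝ) + 1)) :=
  lwcp_marginal_coverage_upper_general P p n Z hZmeas hexch fhat hf v hv α hα hk R hR hdistinct qhat
    hq
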